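/- (Vanishing temporal penalty recovers static modulus.) Suppose in addition that φ is continuous at 0. Then for every p ∈ [1,∞), lim_{λ→0⁺} Mod^λ_{p,σ}(Γ) = Mod_{p,σ}(Γ̌). -/

import Mathlib

open Finset Filter Topology

noncomputable section

/-- A density `ρ` is admissible for the usage matrix `N` if it is nonnegative and
every object has `ρ`-length at least 1. -/
def IsAdmissible {E Γ : Type*} [Fintype E] (N : Γ → E → ℝ) (ρ : E → ℝ) : Prop :=
  (∀ e, 0 ≤ ρ e) ∧ ∀ γ : Γ, 1 ≤ ∑ e, N γ e * ρ e

/-- The `p`-energy of a density. -/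
def pEnergy {E : Type*} [Fintype E] (σ : E → ℝ) (p : ℝ) (ρ : E → ℝ) : ℝ :=
  ∑ e, σ e * ρ e ^ p

/-- The `p`-modulus: the infimum of the `p`-energy over admissible densities. -/
def pModulus {E Γ : Type*} [Fintype E] (N : Γ → E → ℝ) (σ : E → ℝ) (p : ℝ) : ℝ :=
  sInf {x | ∃ ρ : E → ℝ, IsAdmissible N ρ ∧ x = pEnergy σ p ρ}

/-! For `λ > 0` the penalty only enlarges the usage matrix, so `Mod^λ ≤ Mod`; and it
enlarges it by at most the factor `c = φ(λ T)`, `T` a bound for `t`, so rescaling a density by `c`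
gives `Mod / c^p ≤ Mod^λ`. Continuity of `φ` at `0` with `φ 0 = 1` sends `c` to `1` as `λ → 0⁺`. -/

theorem mul_le_mul_of_zero_or_one {a x y : ℝ} (ha : a = 0 ∨ a = 1) (h : a = 1 → x ≤ y) :
    x * a ≤ y * a := by
  rcases ha with rfl | rfl
  · simp
  · simpa using h rfl

section Modulus

variable {E Γ : Type*} [Fintype E] {N N' : Γ → E → ℝ} {σ ρ : E → ℝ} {p c : ℝ}

theorem isAdmissible_one (hN : ∀ γ e, 0 ≤ N γ e) (hrow : ∀ γ, ∃ e, 1 ≤ N γ e) :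
    IsAdmissible N fun _ => 1 := by
  refine ⟨fun _ => zero_le_one, fun γ => ?_⟩
  obtain ⟨e, he⟩ := hrow γ
  simpa using he.trans (single_le_sum (fun e _ => hN γ e) (mem_univ e))

theorem IsAdmissible.mono (h : IsAdmissible N ρ) (hle : N ≤ N') : IsAdmissible N' ρ :=
  ⟨h.1, fun γ => (h.2 γ).trans <|
    sum_le_sum fun e _ => mul_le_mul_of_nonneg_right (hle γ e) (h.1 e)⟩

theorem IsAdmissible.const_mul (h : IsAdmissible N' ρ) (hc : 0 ≤ c)
    (hle : ∀ γ e, N' γ e ≤ c * N γ e) : IsAdmissible N fun e => c * ρ e := by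
  refine ⟨fun e => mul_nonneg hc (h.1 e), fun γ => (h.2 γ).trans <| sum_le_sum fun e _ => ?_⟩
  calc N' γ e * ρ e ≤ c * N γ e * ρ e := mul_le_mul_of_nonneg_right (hle γ e) (h.1 e)
    _ = N γ e * (c * ρ e) := by ring

theorem pEnergy_nonneg (hσ : ∀ e, 0 ≤ σ e) (hρ : ∀ e, 0 ≤ ρ e) : 0 ≤ pEnergy σ p ρ :=
  sum_nonneg fun e _ => mul_nonneg (hσ e) (Real.rpow_nonneg (hρ e) p)

theorem pEnergy_const_mul (hc : 0 ≤ c) (hρ : ∀ e, 0 ≤ ρ e) :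
    pEnergy σ p (fun e => c * ρ e) = c ^ p * pEnergy σ p ρ := by
  simp only [pEnergy, mul_sum]
  refine sum_congr rfl fun e _ => ?_
  rw [Real.mul_rpow hc (hρ e)]
  ring

theorem pModulus_le_pEnergy (hσ : ∀ e, 0 ≤ σ e) (hρ : IsAdmissible N ρ) :
    pModulus N σ p ≤ pEnergy σ p ρ := by
  refine csInf_le ⟨0, ?_⟩ ⟨ρ, hρ, rfl⟩
  rintro x ⟨ρ', hρ', rfl⟩
  exact pEnergy_nonneg hσ hρ'.1

theorem le_pModulus (hρ : IsAdmissible N ρ) {m : ℝ}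
    (h : ∀ ρ', IsAdmissible N ρ' → m ≤ pEnergy σ p ρ') : m ≤ pModulus N σ p := by
  refine le_csInf ⟨_, ρ, hρ, rfl⟩ ?_
  rintro x ⟨ρ', hρ', rfl⟩
  exact h ρ' hρ'

theorem pModulus_anti (hσ : ∀ e, 0 ≤ σ e) (hle : N ≤ N') (hρ : IsAdmissible N ρ) :
    pModulus N' σ p ≤ pModulus N σ p :=
  le_pModulus hρ fun _ hρ' => pModulus_le_pEnergy hσ (hρ'.mono hle)

theorem pModulus_div_rpow_le (hσ : ∀ e, 0 ≤ σ e) (hc : 0 < c)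
    (hle : ∀ γ e, N' γ e ≤ c * N γ e) (hρ : IsAdmissible N' ρ) :
    pModulus N σ p / c ^ p ≤ pModulus N' σ p :=
  le_pModulus hρ fun ρ' hρ' => by
    rw [div_le_iff₀' (Real.rpow_pos_of_pos hc p), ← pEnergy_const_mul hc.le hρ'.1]
    exact pModulus_le_pEnergy hσ (hρ'.const_mul hc.le hle)

end Modulus

theorem temporal_modulus_tendsto_static_general
    {E Γ : Type*} [Fintype E] [Fintype Γ]
    (Nch : Γ → E → ℝ) (hN01 : ∀ γ e, Nch γ e = 0 ∨ Nch γ e = 1)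
    (hrow : ∀ γ, ∃ e, Nch γ e = 1)
    (t : Γ → E → ℝ) (ht : ∀ γ e, Nch γ e = 1 → 0 < t γ e)
    (φ : ℝ → ℝ) (hφ0 : φ 0 = 1) (hφmono : MonotoneOn φ (Set.Ici 0))
    (hφcont : ContinuousAt φ 0)
    (σ : E → ℝ) (hσ : ∀ e, 0 < σ e)
    (p : ℝ) :
    Filter.Tendsto (fun lam : ℝ => pModulus (fun γ e => φ (lam * t γ e) * Nch γ e) σ p)
      (nhdsWithin 0 (Set.Ioi 0)) (nhds (pModulus Nch σ p)) := by
  obtain ⟨T, hT0, hT⟩ : ∃ T, 0 ≤ T ∧ ∀ γ e, t γ e ≤ T := by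
    obtain ⟨T, hT⟩ := Finite.exists_le fun q : Γ × E => t q.1 q.2
    exact ⟨max T 0, le_max_right T 0, fun γ e => (hT (γ, e)).trans (le_max_left T 0)⟩
  have hφ1 : ∀ s, 0 ≤ s → 1 ≤ φ s := fun s hs => hφ0 ▸ hφmono Set.self_mem_Ici hs hs
  have hσ0 : ∀ e, 0 ≤ σ e := fun e => (hσ e).le
  have hNch : IsAdmissible Nch fun _ => 1 :=
    isAdmissible_one (fun γ e => by rcases hN01 γ e with h | h <;> simp [h])
      fun γ => (hrow γ).imp fun _ h => h.ge
  have hle : ∀ lam > 0, Nch ≤ fun γ e => φ (lam * t γ e) * Nch γ e := fun lam hlam γ e => by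
    simpa using mul_le_mul_of_zero_or_one (hN01 γ e) fun h => hφ1 _ (mul_pos hlam (ht γ e h)).le
  have hle_mul : ∀ lam > 0, ∀ γ e, φ (lam * t γ e) * Nch γ e ≤ φ (lam * T) * Nch γ e :=
    fun lam hlam γ e => mul_le_mul_of_zero_or_one (hN01 γ e) fun h =>
      have hs : 0 ≤ lam * t γ e := (mul_pos hlam (ht γ e h)).le
      hφmono hs (mul_nonneg hlam.le hT0) (by gcongr; exact hT γ e)
  have hc : Tendsto (fun lam => φ (lam * T)) (𝓝 0) (𝓝 1) :=
    hφ0 ▸ hφcont.tendsto.comp (by simpa using (continuous_mul_const T).tendsto 0)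
  have hlim : Tendsto (fun lam => pModulus Nch σ p / φ (lam * T) ^ p) (𝓝[>] 0)
      (𝓝 (pModulus Nch σ p)) := by
    have h := (tendsto_const_nhds (x := pModulus Nch σ p)).div
      (hc.rpow_const (p := p) (Or.inl one_ne_zero)) (by simp)
    rw [Real.one_rpow, div_one] at h
    exact h.mono_left nhdsWithin_le_nhds
  refine tendsto_of_tendsto_of_tendsto_of_le_of_le' hlim tendsto_const_nhds ?_ ?_ <;>
    filter_upwards [self_mem_nhdsWithin] with lam (hlam : 0 < lam)
  · exact pModulus_div_rpow_le hσ0 (one_pos.trans_le (hφ1 _ (by positivity)))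
      (hle_mul lam hlam) (hNch.mono (hle lam hlam))
  · exact pModulus_anti hσ0 (hle lam hlam) hNch

/-- vanishing temporal penalty recovers static modulus:
if `φ` is continuous at `0`, then `Mod^λ_{p,σ}(Γ) → Mod_{p,σ}(Γ̌)` as `λ → 0⁺`. -/
theorem temporal_modulus_tendsto_static
    {E Γ : Type*} [Fintype E] [Fintype Γ] [Nonempty E] [Nonempty Γ]
    (Nch : Γ → E → ℝ) (hN01 : ∀ γ e, Nch γ e = 0 ∨ Nch γ e = 1)
    (hrow : ∀ γ, ∃ e, Nch γ e = 1)
    (t : Γ → E → ℝ) (ht : ∀ γ e, Nch γ e = 1 → 0 < t γ e)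
    (φ : ℝ → ℝ) (hφ0 : φ 0 = 1) (hφmono : MonotoneOn φ (Set.Ici 0))
    (hφcont : ContinuousAt φ 0)
    (σ : E → ℝ) (hσ : ∀ e, 0 < σ e)
    (p : ℝ) (hp : 1 ≤ p) :
    Filter.Tendsto (fun lam : ℝ => pModulus (fun γ e => φ (lam * t γ e) * Nch γ e) σ p)
      (nhdsWithin 0 (Set.Ioi 0)) (nhds (pModulus Nch σ p)) :=
  temporal_modulus_tendsto_static_general Nch hN01 hrow t ht φ hφ0 hφmono hφcont σ hσ p
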